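/- arXiv:1208.4141 — 11 statements merged into one kernel-verified Lean document; each statement's English description precedes it below -/
import Mathlib

section
/- Let E be a directed graph, let H ⊆ E^0 be a hereditary subset, and let β be a closed path in E whose base vertex s(β) belongs to the hereditary saturated closure \overline{H}. Then the vertex set β^0 of β intersects H. -/
/-- A directed graph `E = (E⁰, E¹, r, s)`: `V` is the vertex set `E⁰`, `Edg` is the
edge set `E¹`, and `s`, `r` give the source and range of each edge. -/
structure DGraph (V : Type*) (Edg : Type*) where
  s : Edg → V
  r : Edg → V

namespace DGraph

variable {V Edg : Type*}

/-- There is an edge from `v` to `w`. -/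
def Adj (G : DGraph V Edg) (v w : V) : Prop := ∃ e, G.s e = v ∧ G.r e = w

/-- There is a path (possibly of length zero, i.e. a vertex) from `v` to `w`. -/
def Reaches (G : DGraph V Edg) : V → V → Prop := Relation.ReflTransGen G.Adj

/-- A subset `X ⊆ E⁰` is hereditary if `r(e) ∈ X` whenever `s(e) ∈ X`. -/
def Hereditary (G : DGraph V Edg) (X : Set V) : Prop := ∀ e, G.s e ∈ X → G.r e ∈ X

/-- A vertex is a finite emitter if `s⁻¹(v)` is finite and nonempty. -/
def FiniteEmitter (G : DGraph V Edg) (v : V) : Prop :=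
  {e | G.s e = v}.Finite ∧ {e | G.s e = v}.Nonempty

/-- A subset `X ⊆ E⁰` is saturated if every finite emitter `v` with
`r(s⁻¹(v)) ⊆ X` lies in `X`. -/
def Saturated (G : DGraph V Edg) (X : Set V) : Prop :=
  ∀ v, FiniteEmitter G v → (∀ e, G.s e = v → G.r e ∈ X) → v ∈ X

/-- The hereditary saturated closure of `X`: the smallest hereditary and saturated
subset of `E⁰` containing `X`. -/
def satClosure (G : DGraph V Edg) (X : Set V) : Set V :=
  ⋂₀ {Y | Hereditary G Y ∧ Saturated G Y ∧ X ⊆ Y}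

/-- The consecutive edges of a path match up: `r(eᵢ) = s(eᵢ₊₁)`. -/
def IsChain (G : DGraph V Edg) (p : List Edg) : Prop :=
  List.Chain' (fun e f => G.r e = G.s f) p

/-- `p` is a closed path (of length ≥ 1) based at `v`. -/
def IsClosedPathAt (G : DGraph V Edg) (p : List Edg) (v : V) : Prop :=
  ∃ hne : p ≠ [], IsChain G p ∧ G.s (p.head hne) = v ∧ G.r (p.getLast hne) = v

/-- `p` is a closed path (of length ≥ 1). -/
def IsClosedPath (G : DGraph V Edg) (p : List Edg) : Prop := ∃ v, IsClosedPathAt G p v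

/-- The vertex set `α⁰ = {s(e₁), …, s(eₙ)}` of a path. -/
def pathVerts (G : DGraph V Edg) (p : List Edg) : Set V := {w | ∃ e ∈ p, G.s e = w}

/-- An exit of a closed path `e₁⋯eₙ` is an edge `f` with `s(f) = s(eᵢ)` and
`f ≠ eᵢ` for some `i`. -/
def IsExitOf (G : DGraph V Edg) (f : Edg) (p : List Edg) : Prop :=
  ∃ e ∈ p, G.s f = G.s e ∧ f ≠ e

/-- `p` is a simple closed path based at `v`: a closed path whose sources are
pairwise distinct. -/
def IsSimpleClosedPathAt (G : DGraph V Edg) (p : List Edg) (v : V) : Prop :=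
  IsClosedPathAt G p v ∧ (p.map G.s).Nodup

end DGraph

/-!
A vertex `v` on a closed path reaches itself by a nonempty path, so the set of vertices that do
not reach `v` is hereditary and saturated: a vertex reaching `v` always emits an edge whose range
still reaches `v`. If `v ∉ H`, heredity of `H` puts all of `H` into this set, hence also its
hereditary saturated closure, which would then miss `v`. So in fact `v ∈ H`.
-/

namespace DGraph

variable {V Edg : Type*} (G : DGraph V Edg)

theorem satClosure_subset {X Y : Set V} (hY : G.Hereditary Y) (hYs : G.Saturated Y)
    (hXY : X ⊆ Y) : G.satClosure X ⊆ Y :=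
  Set.sInter_subset_of_mem ⟨hY, hYs, hXY⟩

variable {G}

theorem Hereditary.mem_of_reaches {H : Set V} (hH : G.Hereditary H) {a b : V}
    (hab : G.Reaches a b) (ha : a ∈ H) : b ∈ H := by
  induction hab with
  | refl => exact ha
  | tail _ hadj ih =>
    obtain ⟨e, rfl, rfl⟩ := hadj
    exact hH e ih

theorem IsChain.transGen_adj {p : List Edg} (hne : p ≠ []) (hp : G.IsChain p) :
    Relation.TransGen G.Adj (G.s (p.head hne)) (G.r (p.getLast hne)) := by
  induction p with
  | nil => exact absurd rfl hne
  | cons e t ih =>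
    cases t with
    | nil => exact .single ⟨e, rfl, rfl⟩
    | cons f t =>
      obtain ⟨hef, ht⟩ := List.isChain_cons_cons.mp hp
      rw [List.getLast_cons_cons]
      exact .head ⟨e, rfl, hef⟩ (ih (List.cons_ne_nil f t) ht)

theorem IsClosedPathAt.transGen_adj {p : List Edg} {v : V} (hp : G.IsClosedPathAt p v) :
    Relation.TransGen G.Adj v v := by
  obtain ⟨hne, hchain, hhead, hlast⟩ := hp
  simpa only [hhead, hlast] using hchain.transGen_adj hne

theorem IsClosedPathAt.mem_pathVerts {p : List Edg} {v : V} (hp : G.IsClosedPathAt p v) :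
    v ∈ G.pathVerts p :=
  ⟨p.head hp.1, List.head_mem hp.1, hp.2.2.1⟩

variable (G)

theorem hereditary_setOf_not_reaches (v : V) : G.Hereditary {w | ¬ G.Reaches w v} :=
  fun e hs hr => hs (.head ⟨e, rfl, rfl⟩ hr)

theorem saturated_setOf_not_reaches {v : V} (hv : Relation.TransGen G.Adj v v) :
    G.Saturated {w | ¬ G.Reaches w v} := by
  intro w _ hranges hwv
  have hwv' : Relation.TransGen G.Adj w v := by
    rcases Relation.reflTransGen_iff_eq_or_transGen.mp hwv with rfl | h
    · exact hv
    · exact h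
  obtain ⟨u, ⟨e, hes, her⟩, huv⟩ := Relation.TransGen.head'_iff.mp hwv'
  exact hranges e hes (her ▸ huv)

variable {G}

theorem Hereditary.mem_of_mem_satClosure {H : Set V} (hH : G.Hereditary H) {v : V}
    (hvv : Relation.TransGen G.Adj v v) (hv : v ∈ G.satClosure H) : v ∈ H := by
  by_contra hvH
  have hH_sub : H ⊆ {w | ¬ G.Reaches w v} := fun _ hw hwv => hvH (hH.mem_of_reaches hwv hw)
  have hclosure_sub := G.satClosure_subset (G.hereditary_setOf_not_reaches v)
    (G.saturated_setOf_not_reaches hvv) hH_sub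
  exact hclosure_sub hv .refl

end DGraph

/-- if `H ⊆ E⁰` is hereditary and `β` is a closed path whose base
vertex lies in the hereditary saturated closure of `H`, then the vertex set of
`β` intersects `H`. -/
theorem stmt2 {V Edg : Type*} (G : DGraph V Edg) (H : Set V) (hH : G.Hereditary H)
    (β : List Edg) (v : V) (hβ : G.IsClosedPathAt β v) (hv : v ∈ G.satClosure H) :
    (G.pathVerts β ∩ H).Nonempty :=
  ⟨v, hβ.mem_pathVerts, hH.mem_of_mem_satClosure hβ.transGen_adj hv⟩
end

section
/- Let E be a directed graph whose only hereditary and saturated subsets of E^0 are ∅ and E^0, and let α be a closed path in E. Then for every vertex v ∈ E^0 there is a path from v to a vertex of the vertex set α^0 of α. -/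
namespace DGraph

variable {V Edg : Type*} (G : DGraph V Edg)

lemma hereditary_setOf_not_reaches_s3 (W : Set V) :
    G.Hereditary {x | ¬ ∃ w ∈ W, G.Reaches x w} := by
  rintro e hse ⟨w, hw, hreach⟩
  exact hse ⟨w, hw, .head ⟨e, rfl, rfl⟩ hreach⟩

lemma saturated_setOf_not_reaches_s3 {W : Set V} (hW : ∀ w ∈ W, ∃ e, G.s e = w ∧ G.r e ∈ W) :
    G.Saturated {x | ¬ ∃ w ∈ W, G.Reaches x w} := by
  rintro x - hall ⟨w, hw, hreach⟩
  rcases hreach.cases_head with rfl | ⟨y, ⟨e, hse, rfl⟩, hy⟩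
  · obtain ⟨e, hse, hre⟩ := hW x hw
    exact hall e hse ⟨G.r e, hre, .refl⟩
  · exact hall e hse ⟨w, hw, hy⟩

lemma reaches_of_hereditary_saturated_trivial
    (htriv : ∀ X : Set V, G.Hereditary X → G.Saturated X → X = ∅ ∨ X = Set.univ)
    {W : Set V} (hne : W.Nonempty) (hW : ∀ w ∈ W, ∃ e, G.s e = w ∧ G.r e ∈ W) (v : V) :
    ∃ w ∈ W, G.Reaches v w := by
  obtain ⟨u, hu⟩ := hne
  rcases htriv _ (G.hereditary_setOf_not_reaches_s3 W) (G.saturated_setOf_not_reaches_s3 hW) with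
    hempty | huniv
  · by_contra hv
    exact (Set.eq_empty_iff_forall_notMem.mp hempty) v hv
  · exact absurd ⟨u, hu, .refl⟩ (Set.eq_univ_iff_forall.mp huniv u)

variable {G}

lemma IsClosedPathAt.r_mem_pathVerts {p : List Edg} {v : V} (h : G.IsClosedPathAt p v)
    {e : Edg} (he : e ∈ p) : G.r e ∈ G.pathVerts p := by
  obtain ⟨hne, hchain, hhead, hlast⟩ := h
  obtain ⟨i, hi, rfl⟩ := List.getElem_of_mem he
  by_cases hnext : i + 1 < p.length
  · exact ⟨p[i + 1], List.getElem_mem hnext,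
      (List.isChain_iff_getElem.mp hchain i hnext).symm⟩
  · have hlast_eq : p[i] = p.getLast hne := by
      rw [List.getLast_eq_getElem]
      congr
      omega
    rw [hlast_eq, hlast, ← hhead]
    exact ⟨p.head hne, List.head_mem hne, rfl⟩

lemma IsClosedPath.pathVerts_nonempty {p : List Edg} (h : G.IsClosedPath p) :
    (G.pathVerts p).Nonempty := by
  obtain ⟨v, hne, -, hhead, -⟩ := h
  exact ⟨v, p.head hne, List.head_mem hne, hhead⟩

lemma IsClosedPath.exists_edge_r_mem_pathVerts {p : List Edg} (h : G.IsClosedPath p) :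
    ∀ w ∈ G.pathVerts p, ∃ e, G.s e = w ∧ G.r e ∈ G.pathVerts p := by
  obtain ⟨v, hv⟩ := h
  rintro w ⟨e, he, rfl⟩
  exact ⟨e, rfl, hv.r_mem_pathVerts he⟩

end DGraph

/-- if the only hereditary and saturated subsets of `E⁰` are `∅`
and `E⁰`, and `α` is a closed path, then every vertex reaches a vertex of `α⁰`. -/
theorem stmt3 {V Edg : Type*} (G : DGraph V Edg)
    (htriv : ∀ X : Set V, G.Hereditary X → G.Saturated X → X = ∅ ∨ X = Set.univ)
    (α : List Edg) (hα : G.IsClosedPath α) :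
    ∀ v : V, ∃ w ∈ G.pathVerts α, G.Reaches v w :=
  G.reaches_of_hereditary_saturated_trivial htriv hα.pathVerts_nonempty
    hα.exists_edge_r_mem_pathVerts
end

section
/- Let E be a directed graph and H ⊆ E^0 a subset such that E^0 \ H is finite, every vertex of E^0 \ H is a finite emitter, and no vertex of E^0 \ H lies on a closed path. Then every saturated subset Z ⊆ E^0 with H ⊆ Z equals E^0. -/
/-!
If `Z ≠ E⁰`, saturation of `Z` gives every vertex outside `Z` (a finite emitter, since it
lies outside `H`) an edge to another vertex outside `Z`. Following such edges from a vertex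
outside `Z` stays in the finite set `E⁰ \ Z ⊆ E⁰ \ H`, so it revisits a vertex and traces a
closed path through a vertex outside `H`.
-/

namespace DGraph

variable {V Edg : Type*} (G : DGraph V Edg)

theorem isChain_map_range' {f : ℕ → V} {g : ℕ → Edg} (hs : ∀ k, G.s (g k) = f k)
    (hr : ∀ k, G.r (g k) = f (k + 1)) (m n : ℕ) : G.IsChain ((List.range' m n).map g) :=
  (List.isChain_map g).2 <| (List.isChain_range' m n 1).imp fun a b hab => by rw [hr, hs, hab]

theorem exists_isClosedPath_of_walk_repeats {f : ℕ → V} {g : ℕ → Edg}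
    (hs : ∀ k, G.s (g k) = f k) (hr : ∀ k, G.r (g k) = f (k + 1)) {m n : ℕ} (hmn : m < n)
    (heq : f m = f n) :
    ∃ p, G.IsClosedPath p ∧ f m ∈ G.pathVerts p := by
  have hne : (List.range' m (n - m)).map g ≠ [] := by
    simp only [ne_eq, List.map_eq_nil_iff, List.range'_eq_nil_iff]
    omega
  refine ⟨_, ⟨f m, hne, G.isChain_map_range' hs hr m (n - m), ?_, ?_⟩, g m, ?_, hs m⟩
  · simp only [List.head_map, List.head_range', hs]
  · simp only [List.getLast_map, List.getLast_range', hr, heq]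
    congr 1
    omega
  · exact List.mem_map_of_mem (List.mem_range'_1.2 ⟨le_rfl, by omega⟩)

theorem exists_isClosedPath_of_finite {S : Set V} (hS : S.Finite) (hne : S.Nonempty)
    (hout : ∀ v ∈ S, ∃ e, G.s e = v ∧ G.r e ∈ S) :
    ∃ v ∈ S, ∃ p, G.IsClosedPath p ∧ v ∈ G.pathVerts p := by
  obtain ⟨v₀, hv₀⟩ := hne
  have : Nonempty Edg := ⟨(hout v₀ hv₀).choose⟩
  choose! out hout_s hout_r using hout
  set f : ℕ → V := fun k => (G.r ∘ out)^[k] v₀ with hf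
  have hfS : ∀ k, f k ∈ S := fun k => by
    induction k with
    | zero => exact hv₀
    | succ k ih =>
      simpa only [hf, Function.iterate_succ_apply', Function.comp_apply] using hout_r _ ih
  have hs : ∀ k, G.s (out (f k)) = f k := fun k => hout_s _ (hfS k)
  have hr : ∀ k, G.r (out (f k)) = f (k + 1) := fun k => by
    simp only [hf, Function.iterate_succ_apply', Function.comp_apply]
  obtain ⟨m, n, hmn, heq⟩ := hS.exists_lt_map_eq_of_forall_mem hfS
  exact ⟨f m, hfS m, G.exists_isClosedPath_of_walk_repeats hs hr hmn heq⟩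

theorem Saturated.exists_edge_notMem {G : DGraph V Edg} {Z : Set V} (hZ : G.Saturated Z) {v : V}
    (hv : G.FiniteEmitter v) (hvZ : v ∉ Z) : ∃ e, G.s e = v ∧ G.r e ∉ Z := by
  by_contra! h
  exact hvZ (hZ v hv h)

end DGraph

/-- if `E⁰ \ H` is finite, every vertex of `E⁰ \ H` is a finite
emitter, and no vertex of `E⁰ \ H` lies on a closed path, then every saturated
subset `Z` containing `H` equals `E⁰`. -/
theorem stmt8 {V Edg : Type*} (G : DGraph V Edg) (H : Set V)
    (hfin : Hᶜ.Finite) (hemit : ∀ v, v ∉ H → G.FiniteEmitter v)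
    (hnocyc : ∀ v, v ∉ H → ¬ ∃ p : List Edg, G.IsClosedPath p ∧ v ∈ G.pathVerts p)
    (Z : Set V) (hZ : G.Saturated Z) (hHZ : H ⊆ Z) :
    Z = Set.univ := by
  by_contra hZne
  have hZH : Zᶜ ⊆ Hᶜ := Set.compl_subset_compl.2 hHZ
  obtain ⟨v, hvZ, hv⟩ := G.exists_isClosedPath_of_finite (hfin.subset hZH)
    ((Set.ne_univ_iff_exists_notMem Z).1 hZne)
    fun v hvZ => hZ.exists_edge_notMem (hemit v (hZH hvZ)) hvZ
  exact hnocyc v (hZH hvZ) hv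
end

section
/- Let E be a directed graph and let g be a graph trace on E. If v ∈ E^0 admits two distinct edges e ≠ f with s(e) = s(f) = v such that there is a path from r(e) to v and a path from r(f) to v, then g(v) = 0. -/
/-- A graph trace on `E`: a function `g : E⁰ → [0,∞)` such that
(1) `g(v) ≥ Σᵢ g(r(eᵢ))` for every vertex `v` and every finite set of distinct edges
emitted by `v`, and (2) `g(v) = Σ_{s(e)=v} g(r(e))` for every finite emitter `v`. -/
structure GraphTrace {V Edg : Type*} (G : DGraph V Edg) where
  g : V → ℝ
  nonneg : ∀ v, 0 ≤ g v
  sum_le : ∀ (v : V) (F : Finset Edg), (∀ e ∈ F, G.s e = v) →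
    ∑ e ∈ F, g (G.r e) ≤ g v
  emitter_eq : ∀ (v : V) (h : {e | G.s e = v}.Finite), {e | G.s e = v}.Nonempty →
    g v = ∑ e ∈ h.toFinset, g (G.r e)


theorem trace_mono {V Edg : Type*} (G : DGraph V Edg) (T : GraphTrace G) {w u : V}
    (h : G.Reaches w u) : T.g u ≤ T.g w := by
  induction h with
  | refl => exact le_refl _
  | tail _ hadj ih =>
    refine le_trans ?_ ih
    obtain ⟨a, ha, hb⟩ := hadj
    have := T.sum_le (G.s a) {a} (by simp)
    simpa [ha, hb] using this

/-- if `v` emits two distinct edges `e ≠ f` such that there are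
paths from `r(e)` to `v` and from `r(f)` to `v`, then `g(v) = 0` for every
graph trace `g`. -/
theorem stmt10 {V Edg : Type*} (G : DGraph V Edg) (T : GraphTrace G) (v : V)
    (e f : Edg) (hef : e ≠ f) (he : G.s e = v) (hf : G.s f = v)
    (hre : G.Reaches (G.r e) v) (hrf : G.Reaches (G.r f) v) :
    T.g v = 0 := by
  classical
  have h1 : T.g v ≤ T.g (G.r e) := trace_mono G T hre
  have h2 : T.g v ≤ T.g (G.r f) := trace_mono G T hrf
  have hs : T.g (G.r e) + T.g (G.r f) ≤ T.g v := by
    have := T.sum_le v {e, f} (by intro x hx; rcases Finset.mem_insert.mp hx with h|h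
                                  · subst h; exact he
                                  · simp at h; subst h; exact hf)
    simpa [Finset.sum_pair hef] using this
  have := T.nonneg v
  linarith
end

section
/- Let E be a directed graph and let g be a graph trace on E. If a vertex v ∈ E^0 is the base of two distinct simple closed paths, then g(v) = 0. -/
namespace DGraph

variable {V Edg : Type*}

inductive IsPath (G : DGraph V Edg) : V → List Edg → V → Prop
  | nil (u : V) : IsPath G u [] u
  | cons {e : Edg} {l : List Edg} {w : V} : IsPath G (G.r e) l w → IsPath G (G.s e) (e :: l) w

variable {G : DGraph V Edg}

theorem isPath_nil_iff {u w : V} : G.IsPath u [] w ↔ u = w := by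
  constructor
  · rintro ⟨⟩; rfl
  · rintro rfl; exact .nil u

theorem isPath_cons_iff {u w : V} {e : Edg} {l : List Edg} :
    G.IsPath u (e :: l) w ↔ G.s e = u ∧ G.IsPath (G.r e) l w := by
  constructor
  · rintro ⟨⟩; exact ⟨rfl, by assumption⟩
  · rintro ⟨rfl, h⟩; exact .cons h

theorem IsPath.reaches {u w : V} {l : List Edg} (h : G.IsPath u l w) : G.Reaches u w := by
  induction h with
  | nil u => exact .refl
  | @cons e _ _ _ ih => exact .head ⟨e, rfl, rfl⟩ ih

theorem IsPath.reaches_of_mem {u w : V} {l : List Edg} (h : G.IsPath u l w) {e : Edg}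
    (he : e ∈ l) : G.Reaches u (G.s e) ∧ G.Reaches (G.r e) w := by
  induction h with
  | nil u => simp at he
  | @cons e' _ _ hl ih =>
    rcases List.mem_cons.mp he with rfl | he
    · exact ⟨.refl, hl.reaches⟩
    · obtain ⟨hs, hr⟩ := ih he
      exact ⟨.head ⟨e', rfl, rfl⟩ hs, hr⟩

theorem isPath_of_isChain : ∀ {a : Edg} {l : List Edg}, G.IsChain (a :: l) →
    G.IsPath (G.s a) (a :: l) (G.r ((a :: l).getLast (List.cons_ne_nil a l)))
  | _, [], _ => .cons (.nil _)
  | a, b :: l, h => by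
    obtain ⟨hab, hl⟩ := List.isChain_cons_cons.mp h
    refine .cons ?_
    rw [hab, List.getLast_cons (List.cons_ne_nil b l)]
    exact isPath_of_isChain hl

theorem IsClosedPathAt.isPath {p : List Edg} {v : V} (h : G.IsClosedPathAt p v) :
    G.IsPath v p v := by
  obtain ⟨hne, hchain, hhead, hlast⟩ := h
  obtain ⟨a, l, rfl⟩ := List.exists_cons_of_ne_nil hne
  rw [List.head_cons] at hhead
  have := isPath_of_isChain hchain
  rwa [hhead, hlast] at this

theorem IsSimpleClosedPathAt.exists_eq_cons {p : List Edg} {v : V}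
    (h : G.IsSimpleClosedPathAt p v) :
    ∃ a l, p = a :: l ∧ G.s a = v ∧ G.IsPath (G.r a) l v ∧ ∀ f ∈ l, G.s f ≠ v := by
  obtain ⟨hclosed, hnodup⟩ := h
  obtain ⟨a, l, rfl⟩ := List.exists_cons_of_ne_nil hclosed.1
  obtain ⟨hav, hl⟩ := isPath_cons_iff.mp hclosed.isPath
  refine ⟨a, l, rfl, hav, hl, fun f hf hfv => ?_⟩
  rw [List.map_cons, List.nodup_cons] at hnodup
  exact hnodup.1 (hav ▸ hfv ▸ List.mem_map_of_mem hf)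

theorem IsPath.exists_branch {u v : V} {p q : List Edg} (hp : G.IsPath u p v)
    (hq : G.IsPath u q v) (hpv : ∀ f ∈ p, G.s f ≠ v) (hqv : ∀ f ∈ q, G.s f ≠ v)
    (hpq : p ≠ q) : ∃ e ∈ p, ∃ f ∈ q, G.s e = G.s f ∧ e ≠ f := by
  induction hp generalizing q with
  | nil u =>
    obtain _ | ⟨b, q⟩ := q
    · exact absurd rfl hpq
    · exact absurd (isPath_cons_iff.mp hq).1 (hqv b List.mem_cons_self)
  | @cons a p _ _ ih =>
    obtain _ | ⟨b, q⟩ := q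
    · exact absurd (isPath_nil_iff.mp hq) (hpv a List.mem_cons_self)
    obtain ⟨hba, hq⟩ := isPath_cons_iff.mp hq
    by_cases hab : a = b
    · subst hab
      obtain ⟨e, he, f, hf, hef⟩ := ih hq (fun f hf => hpv f (.tail a hf))
        (fun f hf => hqv f (.tail a hf)) (fun h => hpq (h ▸ rfl))
      exact ⟨e, .tail a he, f, .tail a hf, hef⟩
    · exact ⟨a, List.mem_cons_self, b, List.mem_cons_self, hba.symm, hab⟩

theorem IsSimpleClosedPathAt.exists_branch {p q : List Edg} {v : V}
    (hp : G.IsSimpleClosedPathAt p v) (hq : G.IsSimpleClosedPathAt q v) (hpq : p ≠ q) :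
    ∃ e ∈ p, ∃ f ∈ q, G.s e = G.s f ∧ e ≠ f := by
  obtain ⟨a, p, rfl, hav, hp, hpv⟩ := hp.exists_eq_cons
  obtain ⟨b, q, rfl, hbv, hq, hqv⟩ := hq.exists_eq_cons
  by_cases hab : a = b
  · subst hab
    obtain ⟨e, he, f, hf, hef⟩ := hp.exists_branch hq hpv hqv (fun h => hpq (h ▸ rfl))
    exact ⟨e, .tail a he, f, .tail a hf, hef⟩
  · exact ⟨a, List.mem_cons_self, b, List.mem_cons_self, hav.trans hbv.symm, hab⟩

end DGraph

namespace GraphTrace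

variable {V Edg : Type*} {G : DGraph V Edg} (T : GraphTrace G)

theorem g_range_le_g_source (e : Edg) : T.g (G.r e) ≤ T.g (G.s e) := by
  simpa using T.sum_le (G.s e) {e} (by simp)

theorem g_range_add_g_range_le {e f : Edg} (hs : G.s e = G.s f) (hef : e ≠ f) :
    T.g (G.r e) + T.g (G.r f) ≤ T.g (G.s e) := by
  classical
  simpa [Finset.sum_pair hef] using T.sum_le (G.s e) {e, f} (by simp [hs])

theorem g_le_of_reaches {v w : V} (h : G.Reaches v w) : T.g w ≤ T.g v := by
  induction h with
  | refl => exact le_rfl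
  | tail _ hadj ih =>
    obtain ⟨e, rfl, rfl⟩ := hadj
    exact (T.g_range_le_g_source e).trans ih

theorem g_eq_of_mem_isClosedPathAt {p : List Edg} {v : V} (hp : G.IsClosedPathAt p v)
    {e : Edg} (he : e ∈ p) : T.g (G.s e) = T.g v ∧ T.g (G.r e) = T.g v := by
  obtain ⟨hs, hr⟩ := hp.isPath.reaches_of_mem he
  have hvs := T.g_le_of_reaches hs
  have hrv := T.g_le_of_reaches hr
  have hre := T.g_range_le_g_source e
  constructor <;> linarith

end GraphTrace

/-- if a vertex `v` is the base of two distinct simple closed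
paths, then `g(v) = 0` for every graph trace `g`. -/
theorem stmt11 {V Edg : Type*} (G : DGraph V Edg) (T : GraphTrace G) (v : V)
    (p q : List Edg) (hp : G.IsSimpleClosedPathAt p v) (hq : G.IsSimpleClosedPathAt q v)
    (hpq : p ≠ q) : T.g v = 0 := by
  obtain ⟨e, he, f, hf, hs, hef⟩ := hp.exists_branch hq hpq
  have hbranch := T.g_range_add_g_range_le hs hef
  obtain ⟨hse, hre⟩ := T.g_eq_of_mem_isClosedPathAt hp.1 he
  have hrf := (T.g_eq_of_mem_isClosedPathAt hq.1 hf).2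
  linarith [T.nonneg v]
end

section
/- Let E be a directed graph with E^0 countable and let g be a bounded graph trace on E, i.e., the sum ‖g‖ = Σ_{v ∈ E^0} g(v) is finite. If a vertex v ∈ E^0 is left infinite, i.e., the set {w ∈ E^0 : there is a path from w to v} is infinite, then g(v) = 0. -/
/-- if `E⁰` is countable, `g` is a bounded graph trace
(`‖g‖ = Σ_{v ∈ E⁰} g(v) < ∞`), and `v` is left infinite (infinitely many
vertices `w` have a path from `w` to `v`), then `g(v) = 0`. -/
theorem stmt12 {V Edg : Type*} [Countable V] (G : DGraph V Edg) (T : GraphTrace G)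
    (hbdd : Summable T.g) (v : V) (hv : {w | G.Reaches w v}.Infinite) :
    T.g v = 0 := by
  -- Step 1: monotonicity along paths
  have mono : ∀ w, G.Reaches w v → T.g v ≤ T.g w := by
    intro w hw
    induction hw using Relation.ReflTransGen.head_induction_on with
    | refl => exact le_refl _
    | head h _ ih =>
      obtain ⟨e, hse, hre⟩ := h
      refine le_trans ih ?_
      have := T.sum_le (G.s e) ({e} : Finset Edg) (by simp)
      simpa [hse, hre] using this
  by_contra hne
  have hpos : 0 < T.g v := lt_of_le_of_ne (T.nonneg v) (Ne.symm hne)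
  have hfin : {w | T.g v ≤ T.g w}.Finite := by
    have h2 : ∀ᶠ w in Filter.cofinite, T.g w < T.g v :=
      hbdd.tendsto_cofinite_zero.eventually (eventually_lt_nhds hpos)
    simpa [Filter.eventually_cofinite, not_lt] using h2
  exact hv (hfin.subset (fun w hw => mono w hw))
end

section
/- Let E be a directed graph and let g be a graph trace on E. Then the set N_g := {v ∈ E^0 : g(v) = 0} is hereditary and saturated. -/
/-- for a graph trace `g`, the set `N_g = {v ∈ E⁰ : g(v) = 0}` is
hereditary and saturated. -/
theorem stmt13 {V Edg : Type*} (G : DGraph V Edg) (T : GraphTrace G) :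
    G.Hereditary {v | T.g v = 0} ∧ G.Saturated {v | T.g v = 0} := by
  constructor
  · intro e he
    have h1 : T.g (G.r e) ≤ T.g (G.s e) := by
      have := T.sum_le (G.s e) {e} (by simp)
      simpa using this
    have := T.nonneg (G.r e)
    simp only [Set.mem_setOf_eq] at he ⊢
    linarith
  · intro v hv hr
    have := T.emitter_eq v hv.1 hv.2
    simp only [Set.mem_setOf_eq]
    rw [this]
    apply Finset.sum_eq_zero
    intro e he
    exact hr e (by simpa using he)
end

section
/- Let E be a directed graph and suppose α = e_1⋯e_m and β = f_1⋯f_k are two distinct simple closed paths based at the same vertex v ∈ E^0. Then there exists a vertex w lying on α or β and two distinct edges e ≠ f with s(e) = s(f) = w such that there is a path from r(e) to w and a path from r(f) to w; that is, w belongs to the set H_0 := {u ∈ E^0 : there exist e ≠ f ∈ E^1 with s(e) = s(f) = u and paths from r(e) to u and from r(f) to u}. -/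
/-! Walk along `α` and `β` from `v` until they first differ, at edges `e ≠ f`. Neither path
can be a proper prefix of the other, since a closed path at `v` followed by further edges
would pass through `v` twice. So `e` and `f` leave the same vertex `w`, and going round `α`
from `r(e)`, resp. round `β` from `r(f)`, leads through `v` back to `w`. -/

theorem List.isPrefix_or_isPrefix_or_exists_append_cons_ne {X : Type*} :
    ∀ l₁ l₂ : List X, l₁ <+: l₂ ∨ l₂ <+: l₁ ∨
      ∃ p a₁ a₂ x₁ x₂, x₁ ≠ x₂ ∧ l₁ = p ++ x₁ :: a₁ ∧ l₂ = p ++ x₂ :: a₂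
  | [], _ => Or.inl List.nil_prefix
  | _ :: _, [] => Or.inr (Or.inl List.nil_prefix)
  | x :: l₁, y :: l₂ => by
    by_cases hxy : x = y
    · subst hxy
      rcases List.isPrefix_or_isPrefix_or_exists_append_cons_ne l₁ l₂ with
        h | h | ⟨p, a₁, a₂, x₁, x₂, hne, rfl, rfl⟩
      · exact Or.inl (List.cons_prefix_cons.mpr ⟨rfl, h⟩)
      · exact Or.inr (Or.inl (List.cons_prefix_cons.mpr ⟨rfl, h⟩))
      · exact Or.inr (Or.inr ⟨x :: p, a₁, a₂, x₁, x₂, hne, rfl, rfl⟩)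
    · exact Or.inr (Or.inr ⟨[], l₁, l₂, x, y, hxy, rfl, rfl⟩)

namespace DGraph

variable {V Edg : Type*} {G : DGraph V Edg}

theorem isChain_cons_cons {e g : Edg} {p : List Edg} :
    G.IsChain (e :: g :: p) ↔ G.r e = G.s g ∧ G.IsChain (g :: p) :=
  List.isChain_cons_cons

theorem IsClosedPathAt.isChain {v : V} {p : List Edg} (h : G.IsClosedPathAt p v) :
    G.IsChain p :=
  h.2.1

theorem IsChain.r_eq_s_head {c : Edg} {q : List Edg} (h : G.IsChain (c :: q)) (hq : q ≠ []) :
    G.r c = G.s (q.head hq) := by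
  cases q with
  | nil => exact absurd rfl hq
  | cons d q => exact (isChain_cons_cons.mp h).1

theorem IsChain.reaches_src_of_mem {e f : Edg} {p : List Edg} (h : G.IsChain (e :: p))
    (hf : f ∈ e :: p) : G.Reaches (G.s e) (G.s f) := by
  induction p generalizing e with
  | nil => rw [List.mem_singleton.mp hf]; exact .refl
  | cons g p ih =>
    obtain ⟨hlink, htail⟩ := isChain_cons_cons.mp h
    rcases List.mem_cons.mp hf with rfl | hf
    · exact .refl
    · exact Relation.ReflTransGen.head ⟨e, rfl, hlink⟩ (ih htail hf)

theorem IsChain.reaches_getLast_of_mem {e f : Edg} {p : List Edg} (h : G.IsChain (e :: p))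
    (hf : f ∈ e :: p) : G.Reaches (G.r f) (G.r ((e :: p).getLast (List.cons_ne_nil e p))) := by
  induction p generalizing e with
  | nil => rw [List.mem_singleton.mp hf]; exact .refl
  | cons g p ih =>
    obtain ⟨hlink, htail⟩ := isChain_cons_cons.mp h
    rw [List.getLast_cons_cons]
    rcases List.mem_cons.mp hf with rfl | hf
    · rw [hlink]
      exact (htail.reaches_src_of_mem (List.getLast_mem _)).tail ⟨_, rfl, rfl⟩
    · exact ih htail hf

-- `(p.map G.r).getLastD u` is the vertex reached by following `p` from `u`.
theorem IsChain.src_eq_getLastD {e : Edg} {p a : List Edg} (h : G.IsChain (p ++ e :: a)) :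
    G.s e = (p.map G.r).getLastD (G.s ((p ++ e :: a).head (by simp))) := by
  induction p with
  | nil => simp
  | cons c p ih =>
    rw [List.cons_append] at h
    simpa only [List.cons_append, List.head_cons, List.map_cons, List.getLastD_cons,
      h.r_eq_s_head (by simp)] using ih h.tail

theorem IsClosedPathAt.src_eq_getLastD {v : V} {e : Edg} {p a : List Edg}
    (h : G.IsClosedPathAt (p ++ e :: a) v) : G.s e = (p.map G.r).getLastD v := by
  obtain ⟨_, hc, hs, -⟩ := h
  rw [hc.src_eq_getLastD, hs]

theorem IsClosedPathAt.reaches_src_of_mem {v : V} {f : Edg} {p : List Edg}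
    (h : G.IsClosedPathAt p v) (hf : f ∈ p) : G.Reaches (G.r f) (G.s f) := by
  obtain ⟨hne, hc, hs, hr⟩ := h
  cases p with
  | nil => exact absurd rfl hne
  | cons e p =>
    have hto : G.Reaches (G.r f) v := hr ▸ hc.reaches_getLast_of_mem hf
    exact hto.trans (hs ▸ hc.reaches_src_of_mem hf)

theorem IsClosedPathAt.eq_of_isPrefix {v : V} {p q : List Edg} (hp : G.IsClosedPathAt p v)
    (hq : G.IsChain q) (hnd : (q.map G.s).Nodup) (h : p <+: q) : p = q := by
  obtain ⟨t, rfl⟩ := h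
  obtain ⟨hne, -, hs, hr⟩ := hp
  rcases t with _ | ⟨c, t⟩
  · exact (List.append_nil p).symm
  · exfalso
    have hc : G.s c = v := by
      rw [← hr]
      exact ((List.isChain_append.mp hq).2.2 _ (List.getLast?_eq_some_getLast hne) _ rfl).symm
    rw [List.map_append] at hnd
    exact List.disjoint_of_nodup_append hnd (List.mem_map.mpr ⟨_, List.head_mem hne, hs⟩)
      (List.mem_map.mpr ⟨c, List.mem_cons_self, hc⟩)

end DGraph

/-- if `α` and `β` are two distinct simple closed paths based at
the same vertex `v`, then some vertex `w` lying on `α` or `β` emits two distinct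
edges `e ≠ f` with paths from `r(e)` to `w` and from `r(f)` to `w`, i.e. `w`
belongs to the set `H₀`. -/
theorem stmt14 {V Edg : Type*} (G : DGraph V Edg) (v : V) (α β : List Edg)
    (hα : G.IsSimpleClosedPathAt α v) (hβ : G.IsSimpleClosedPathAt β v)
    (hαβ : α ≠ β) :
    ∃ w, (w ∈ G.pathVerts α ∨ w ∈ G.pathVerts β) ∧
      ∃ e f : Edg, e ≠ f ∧ G.s e = w ∧ G.s f = w ∧
        G.Reaches (G.r e) w ∧ G.Reaches (G.r f) w := by
  rcases α.isPrefix_or_isPrefix_or_exists_append_cons_ne β with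
    h | h | ⟨p, a, b, e, f, hef, rfl, rfl⟩
  · exact absurd (hα.1.eq_of_isPrefix hβ.1.isChain hβ.2 h) hαβ
  · exact absurd (hβ.1.eq_of_isPrefix hα.1.isChain hα.2 h).symm hαβ
  · have hsrc : G.s e = G.s f := by
      rw [hα.1.src_eq_getLastD, hβ.1.src_eq_getLastD]
    refine ⟨G.s e, Or.inl ⟨e, by simp, rfl⟩, e, f, hef, rfl, hsrc.symm,
      hα.1.reaches_src_of_mem (by simp), ?_⟩
    exact hsrc ▸ hβ.1.reaches_src_of_mem (by simp)
end

section
/- Let E be a directed graph, let H_0 := {u ∈ E^0 : there exist e ≠ f ∈ E^1 with s(e) = s(f) = u and paths from r(e) to u and from r(f) to u}, and let H be any subset of E^0 containing H_0. Then no vertex v ∈ E^0 \ H is the base of two distinct simple closed paths all of whose vertices lie in E^0 \ H. In particular, the quotient graph on the vertices outside the hereditary saturated closure of H_0 has isolated closed paths. -/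
/-!
Two distinct simple closed paths `p`, `q` based at `v` cannot be prefixes of one another, since a
simple closed path returns to `v` only at its end. So they share a common prefix and then leave a
common vertex `u` of `p` along distinct edges `e ≠ f`. Both `r(e)` and `r(f)` reach `v` along the
rest of their paths, and `v` reaches `u` along `p`; hence `u ∈ H₀ ⊆ H`, although `u` lies on `p`.
-/

theorem List.exists_append_cons_of_ne {α : Type*} {p q : List α} (h : p ≠ q) :
    (∃ a t, q = p ++ a :: t) ∨ (∃ a t, p = q ++ a :: t) ∨
      ∃ l a b p' q', a ≠ b ∧ p = l ++ a :: p' ∧ q = l ++ b :: q' := by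
  induction p generalizing q with
  | nil =>
    obtain ⟨a, t, rfl⟩ := List.exists_cons_of_ne_nil (Ne.symm h)
    exact Or.inl ⟨a, t, rfl⟩
  | cons a p ih =>
    rcases q with _ | ⟨b, q⟩
    · exact Or.inr (Or.inl ⟨a, p, rfl⟩)
    by_cases hab : a = b
    · subst hab
      rcases ih (fun hpq => h (hpq ▸ rfl)) with
        ⟨c, t, rfl⟩ | ⟨c, t, rfl⟩ | ⟨l, c, d, p', q', hcd, rfl, rfl⟩
      · exact Or.inl ⟨c, t, rfl⟩
      · exact Or.inr (Or.inl ⟨c, t, rfl⟩)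
      · exact Or.inr (Or.inr ⟨a :: l, c, d, p', q', hcd, rfl, rfl⟩)
    · exact Or.inr (Or.inr ⟨[], a, b, p, q, hab, rfl, rfl⟩)

namespace DGraph

variable {V Edg : Type*} {G : DGraph V Edg} {p : List Edg} {v : V}

theorem adj_source_range (G : DGraph V Edg) (e : Edg) : G.Adj (G.s e) (G.r e) := ⟨e, rfl, rfl⟩

theorem IsClosedPathAt.reaches_source (hp : G.IsClosedPathAt p v) {e : Edg} (he : e ∈ p) :
    G.Reaches v (G.s e) := by
  obtain ⟨_, hc, hhead, -⟩ := hp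
  refine List.IsChain.induction (fun e => G.Reaches v (G.s e)) p hc ?_ ?_ e he
  · intro x y hxy hx
    exact hx.tail (hxy ▸ G.adj_source_range x)
  · exact fun _ => hhead ▸ .refl

theorem IsClosedPathAt.range_reaches (hp : G.IsClosedPathAt p v) {e : Edg} (he : e ∈ p) :
    G.Reaches (G.r e) v := by
  obtain ⟨_, hc, -, hlast⟩ := hp
  refine List.IsChain.backwards_induction (fun e => G.Reaches (G.r e) v) p hc ?_ ?_ e he
  · intro x y hxy hy
    exact hy.head (hxy ▸ G.adj_source_range y)
  · exact fun _ => hlast ▸ .refl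

theorem IsClosedPathAt.not_isSimpleClosedPathAt_append_cons (hp : G.IsClosedPathAt p v)
    (a : Edg) (t : List Edg) : ¬ G.IsSimpleClosedPathAt (p ++ a :: t) v := by
  rintro ⟨⟨-, hc, -, -⟩, hnd⟩
  obtain ⟨hne, -, hhead, hlast⟩ := hp
  have hav : G.s a = v :=
    hlast ▸ (hc.rel_getLast_head_of_append hne (List.cons_ne_nil a t)).symm
  rw [List.map_append, List.nodup_append] at hnd
  exact hnd.2.2 v (List.mem_map.2 ⟨_, List.head_mem hne, hhead⟩) v (by simp [hav]) rfl

theorem IsClosedPathAt.source_eq_of_append_cons {l p' q' : List Edg} {e f : Edg}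
    (hp : G.IsClosedPathAt (l ++ e :: p') v) (hq : G.IsClosedPathAt (l ++ f :: q') v) :
    G.s e = G.s f := by
  obtain ⟨_, hpc, hph, -⟩ := hp
  obtain ⟨_, hqc, hqh, -⟩ := hq
  rcases l.eq_nil_or_concat with rfl | ⟨l, x, rfl⟩
  · simp only [List.nil_append, List.head_cons] at hph hqh
    rw [hph, hqh]
  · simp only [List.concat_eq_append, List.append_assoc, List.singleton_append] at hpc hqc
    exact (List.isChain_append_cons_cons.1 hpc).2.1.symm.trans
      (List.isChain_append_cons_cons.1 hqc).2.1

end DGraph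

theorem stmt15_general {V Edg : Type*} (G : DGraph V Edg) (H : Set V)
    (hH : {u | ∃ e f : Edg, e ≠ f ∧ G.s e = u ∧ G.s f = u ∧
      G.Reaches (G.r e) u ∧ G.Reaches (G.r f) u} ⊆ H)
    (v : V) (p q : List Edg)
    (hp : G.IsSimpleClosedPathAt p v) (hq : G.IsSimpleClosedPathAt q v)
    (hpH : G.pathVerts p ⊆ Hᶜ) :
    p = q := by
  by_contra hne
  rcases List.exists_append_cons_of_ne hne with
    ⟨a, t, rfl⟩ | ⟨a, t, rfl⟩ | ⟨l, e, f, p', q', hef, rfl, rfl⟩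
  · exact hp.1.not_isSimpleClosedPathAt_append_cons a t hq
  · exact hq.1.not_isSimpleClosedPathAt_append_cons a t hp
  · have hep : e ∈ l ++ e :: p' := by simp
    have hvu : G.Reaches v (G.s e) := hp.1.reaches_source hep
    refine hpH ⟨e, hep, rfl⟩ (hH ⟨e, f, hef, rfl, ?_, ?_, ?_⟩)
    · exact (hp.1.source_eq_of_append_cons hq.1).symm
    · exact (hp.1.range_reaches hep).trans hvu
    · exact (hq.1.range_reaches (by simp)).trans hvu

/-- if `H` contains the set
`H₀ = {u : ∃ e ≠ f with s(e) = s(f) = u and paths from r(e), r(f) back to u}`,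
then no vertex outside `H` is the base of two distinct simple closed paths all
of whose vertices lie outside `H`. -/
theorem stmt15 {V Edg : Type*} (G : DGraph V Edg) (H : Set V)
    (hH : {u | ∃ e f : Edg, e ≠ f ∧ G.s e = u ∧ G.s f = u ∧
      G.Reaches (G.r e) u ∧ G.Reaches (G.r f) u} ⊆ H)
    (v : V) (hv : v ∉ H) (p q : List Edg)
    (hp : G.IsSimpleClosedPathAt p v) (hq : G.IsSimpleClosedPathAt q v)
    (hpH : G.pathVerts p ⊆ Hᶜ) (hqH : G.pathVerts q ⊆ Hᶜ) :
    p = q :=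
  stmt15_general G H hH v p q hp hq hpH
end

section
/- Let E be a directed graph and let G ⊆ E^0 ∪ E^1 be a finite set with G^0 := G ∩ E^0, G^1 := G ∩ E^1 and r(G^1) ⊆ G^0. Form the finite graph E_G with vertex set E_G^0 := G^1 ∪ {v ∈ G^0 : s^{-1}(v) = ∅ or v = s(e) for some e ∈ E^1 \ G^1} and edge set E_G^1 := {(e, f) ∈ G^1 × E_G^0 : r(e) = s(f)} (where s(f) = f when f is a vertex), with source s(e,f) = e and range r(e,f) = f. If E contains no closed path, then E_G contains no closed path. -/
/-- The vertex set `E_G⁰ = G¹ ∪ {v ∈ G⁰ : s⁻¹(v) = ∅ or v = s(e) for some e ∈ E¹ \ G¹}`,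
realized inside the type `Edg ⊕ V`. -/
def EGVerts {V Edg : Type*} (G : DGraph V Edg) (G0 : Set V) (G1 : Set Edg) :
    Set (Edg ⊕ V) :=
  Sum.inl '' G1 ∪ Sum.inr '' {v ∈ G0 | (∀ e, G.s e ≠ v) ∨ ∃ e, e ∉ G1 ∧ G.s e = v}

/-- For a vertex of `E_G` (an edge of `E` or a vertex of `E`), the corresponding
source vertex of `E` (`s(f) = f` when `f` is a vertex). -/
def EGsrc {V Edg : Type*} (G : DGraph V Edg) : Edg ⊕ V → V
  | Sum.inl e => G.s e
  | Sum.inr v => v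

/-- The graph `E_G`: edges are pairs `(e, f) ∈ G¹ × E_G⁰` with `r(e) = s(f)`,
with source `e` and range `f`. -/
def EGraph {V Edg : Type*} (G : DGraph V Edg) (G0 : Set V) (G1 : Set Edg) :
    DGraph (Edg ⊕ V)
      {p : Edg × (Edg ⊕ V) // p.1 ∈ G1 ∧ p.2 ∈ EGVerts G G0 G1 ∧ G.r p.1 = EGsrc G p.2} where
  s := fun p => Sum.inl p.1.1
  r := fun p => p.1.2

namespace DGraph

variable {V W Edg Edh : Type*} {G : DGraph V Edg} {H : DGraph W Edh}
  {φ : V → W} {ψ : Edg → Edh}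

theorem IsChain.map (hs : ∀ e, H.s (ψ e) = φ (G.s e)) (hr : ∀ e, H.r (ψ e) = φ (G.r e))
    {p : List Edg} (hp : G.IsChain p) : H.IsChain (p.map ψ) :=
  (List.isChain_map ψ).2 (hp.imp fun e f hef => by rw [hr, hs, hef])

theorem IsClosedPathAt.map (hs : ∀ e, H.s (ψ e) = φ (G.s e))
    (hr : ∀ e, H.r (ψ e) = φ (G.r e)) {p : List Edg} {v : V} (hp : G.IsClosedPathAt p v) :
    H.IsClosedPathAt (p.map ψ) (φ v) := by
  obtain ⟨hne, hchain, hhead, hlast⟩ := hp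
  refine ⟨by simpa using hne, hchain.map hs hr, ?_, ?_⟩
  · rw [List.head_map, hs, hhead]
  · rw [List.getLast_map, hr, hlast]

theorem IsClosedPath.map (hs : ∀ e, H.s (ψ e) = φ (G.s e))
    (hr : ∀ e, H.r (ψ e) = φ (G.r e)) {p : List Edg} (hp : G.IsClosedPath p) :
    H.IsClosedPath (p.map ψ) :=
  let ⟨v, hv⟩ := hp
  ⟨φ v, hv.map hs hr⟩

end DGraph

-- `EGsrc` on vertices and `(e, f) ↦ e` on edges form a morphism `E_G → E`,
-- so a closed path in `E_G` would give one in `E`.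
theorem stmt16_general {V Edg : Type*} (G : DGraph V Edg) (G0 : Set V) (G1 : Set Edg)
    (hacyc : ∀ p : List Edg, ¬ G.IsClosedPath p) :
    ∀ q : List {p : Edg × (Edg ⊕ V) //
        p.1 ∈ G1 ∧ p.2 ∈ EGVerts G G0 G1 ∧ G.r p.1 = EGsrc G p.2},
      ¬ (EGraph G G0 G1).IsClosedPath q :=
  fun _ hq => hacyc _ (hq.map (φ := EGsrc G) (ψ := fun x => x.1.1) (fun _ => rfl)
    (fun x => x.2.2.2))

/-- for a finite `G ⊆ E⁰ ∪ E¹` with `r(G¹) ⊆ G⁰`, if `E` contains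
no closed path then neither does `E_G`. -/
theorem stmt16 {V Edg : Type*} (G : DGraph V Edg) (G0 : Set V) (G1 : Set Edg)
    (h0 : G0.Finite) (h1 : G1.Finite) (hr : ∀ e ∈ G1, G.r e ∈ G0)
    (hacyc : ∀ p : List Edg, ¬ G.IsClosedPath p) :
    ∀ q : List {p : Edg × (Edg ⊕ V) //
        p.1 ∈ G1 ∧ p.2 ∈ EGVerts G G0 G1 ∧ G.r p.1 = EGsrc G p.2},
      ¬ (EGraph G G0 G1).IsClosedPath q :=
  stmt16_general G G0 G1 hacyc
end

section
/- Let E be a directed graph and H ⊆ E^0 a hereditary subset. Form the graph _HE with vertex set (_HE)^0 := H ∪ F_E(H) and edge set (_HE)^1 := {e ∈ E^1 : s(e) ∈ H} ∪ {ᾱ : α ∈ F_E(H)}, where for α ∈ F_E(H) the edge ᾱ has source α and range r(α), and edges with source in H keep their source and range from E. Then no vertex of F_E(H) is the range of any edge of _HE, and consequently every closed path in _HE consists entirely of edges of E with source in H; in particular the closed paths of _HE are exactly the closed paths of E all of whose vertices lie in H. -/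
/-- An element of `F_E(H)`: a path `α = e₁⋯eₙ` of length `n ≥ 1` with `s(α) ∉ H`,
`r(α) ∈ H`, and `r(eᵢ) ∉ H` for every `i < n`. -/
structure FPath {V Edg : Type*} (G : DGraph V Edg) (H : Set V) where
  edges : List Edg
  ne : edges ≠ []
  chain : G.IsChain edges
  src_not_mem : G.s (edges.head ne) ∉ H
  rng_mem : G.r (edges.getLast ne) ∈ H
  mid_not_mem : ∀ e ∈ edges.dropLast, G.r e ∉ H

/-- The graph `_HE`: its vertices are `H ∪ F_E(H)` (realized inside `V ⊕ FPath G H`)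
and its edges are `{e ∈ E¹ : s(e) ∈ H} ∪ {ᾱ : α ∈ F_E(H)}`, where `ᾱ` has source `α`
and range `r(α)`, and edges with source in `H` keep their source and range from `E`. -/
def HEGraph {V Edg : Type*} (G : DGraph V Edg) (H : Set V) :
    DGraph (V ⊕ FPath G H) ({e : Edg // G.s e ∈ H} ⊕ FPath G H) where
  s := fun f => match f with
    | Sum.inl e => Sum.inl (G.s e.1)
    | Sum.inr α => Sum.inr α
  r := fun f => match f with
    | Sum.inl e => Sum.inl (G.r e.1)
    | Sum.inr α => Sum.inl (G.r (α.edges.getLast α.ne))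

/-- The underlying `E`-edge of an edge of `_HE` (for an edge `ᾱ` we return a dummy,
the last edge of `α`; closed paths of `_HE` never use such edges). -/
def toE {V Edg : Type*} (G : DGraph V Edg) (H : Set V) :
    ({e : Edg // G.s e ∈ H} ⊕ FPath G H) → Edg
  | Sum.inl e => e.1
  | Sum.inr α => α.edges.getLast α.ne

namespace DGraph

variable {V V' Edg Edg' : Type*}

def restrictEdges (G : DGraph V Edg) (P : Edg → Prop) : DGraph V {e // P e} where
  s e := G.s e
  r e := G.r e

theorem isClosedPath_iff {G : DGraph V Edg} {p : List Edg} :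
    G.IsClosedPath p ↔ ∃ hne : p ≠ [], G.IsChain p ∧ G.s (p.head hne) = G.r (p.getLast hne) := by
  constructor
  · rintro ⟨v, hne, hchain, hhead, hlast⟩
    exact ⟨hne, hchain, hhead.trans hlast.symm⟩
  · rintro ⟨hne, hchain, hcycle⟩
    exact ⟨_, hne, hchain, hcycle, rfl⟩

theorem IsClosedPath.s_mem_of_forall_r_mem {G : DGraph V Edg} {p : List Edg} {X : Set V}
    (hp : G.IsClosedPath p) (hX : ∀ e, G.r e ∈ X) : ∀ e ∈ p, G.s e ∈ X := by
  obtain ⟨hne, hchain, hcycle⟩ := isClosedPath_iff.mp hp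
  exact hchain.induction (fun e => G.s e ∈ X) p (fun e f hef _ => hef ▸ hX e)
    (fun _ => hcycle ▸ hX _)

section Map

variable {G : DGraph V Edg} {G' : DGraph V' Edg'} {φ : Edg → Edg'} {ψ : V → V'}

theorem isChain_map_iff (hψ : ψ.Injective) (hs : ∀ e, G'.s (φ e) = ψ (G.s e))
    (hr : ∀ e, G'.r (φ e) = ψ (G.r e)) {p : List Edg} :
    G'.IsChain (p.map φ) ↔ G.IsChain p := by
  unfold IsChain
  exact (List.isChain_map φ).trans (by simp only [hs, hr, hψ.eq_iff]; rfl)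

theorem isClosedPath_map_iff (hψ : ψ.Injective) (hs : ∀ e, G'.s (φ e) = ψ (G.s e))
    (hr : ∀ e, G'.r (φ e) = ψ (G.r e)) {p : List Edg} :
    G'.IsClosedPath (p.map φ) ↔ G.IsClosedPath p := by
  simp only [isClosedPath_iff, isChain_map_iff hψ hs hr, List.head_map, List.getLast_map, hs, hr,
    hψ.eq_iff, ne_eq, List.map_eq_nil_iff]

end Map

end DGraph

namespace HEGraph

variable {V Edg : Type*} {G : DGraph V Edg} {H : Set V}

theorem r_mem_range_inl (f : {e : Edg // G.s e ∈ H} ⊕ FPath G H) :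
    (HEGraph G H).r f ∈ Set.range Sum.inl := by
  cases f <;> exact ⟨_, rfl⟩

theorem s_mem_range_inl_iff {f : {e : Edg // G.s e ∈ H} ⊕ FPath G H} :
    (HEGraph G H).s f ∈ Set.range Sum.inl ↔ f ∈ Set.range Sum.inl := by
  cases f <;> simp [HEGraph]

theorem mem_range_inl_of_isClosedPath {p : List ({e : Edg // G.s e ∈ H} ⊕ FPath G H)}
    (hp : (HEGraph G H).IsClosedPath p) : ∀ f ∈ p, f ∈ Set.range Sum.inl := fun f hf =>
  s_mem_range_inl_iff.mp (hp.s_mem_of_forall_r_mem r_mem_range_inl f hf)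

theorem isClosedPath_map_inl_iff {p : List {e : Edg // G.s e ∈ H}} :
    (HEGraph G H).IsClosedPath (p.map Sum.inl) ↔ G.IsClosedPath (p.map Subtype.val) :=
  (DGraph.isClosedPath_map_iff (G := G.restrictEdges (G.s · ∈ H)) Sum.inl_injective
    (fun _ => rfl) (fun _ => rfl)).trans
  (DGraph.isClosedPath_map_iff (φ := Subtype.val) (ψ := id) Function.injective_id
    (fun _ => rfl) (fun _ => rfl)).symm

end HEGraph

theorem toE_comp_inl {V Edg : Type*} (G : DGraph V Edg) (H : Set V) :
    toE G H ∘ Sum.inl = Subtype.val :=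
  rfl

theorem stmt18_general {V Edg : Type*} (G : DGraph V Edg) (H : Set V) :
    (∀ (f : {e : Edg // G.s e ∈ H} ⊕ FPath G H) (α : FPath G H),
      (HEGraph G H).r f ≠ Sum.inr α) ∧
    (∀ p : List ({e : Edg // G.s e ∈ H} ⊕ FPath G H), (HEGraph G H).IsClosedPath p →
      ∀ f ∈ p, ∃ e : {e : Edg // G.s e ∈ H}, f = Sum.inl e) ∧
    (∀ q : List Edg,
      (G.IsClosedPath q ∧ ∀ e ∈ q, G.s e ∈ H) ↔
      (∃ p : List ({e : Edg // G.s e ∈ H} ⊕ FPath G H),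
        (HEGraph G H).IsClosedPath p ∧ p.map (toE G H) = q)) := by
  refine ⟨fun f α hf => ?_, fun p hp f hf => ?_, fun q => ⟨?_, ?_⟩⟩
  · obtain ⟨v, hv⟩ := HEGraph.r_mem_range_inl f
    exact Sum.inl_ne_inr (hv.trans hf)
  · obtain ⟨e, rfl⟩ := HEGraph.mem_range_inl_of_isClosedPath hp f hf
    exact ⟨e, rfl⟩
  · rintro ⟨hq, hqH⟩
    lift q to List {e : Edg // G.s e ∈ H} using hqH
    refine ⟨q.map Sum.inl, HEGraph.isClosedPath_map_inl_iff.mpr hq, ?_⟩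
    rw [List.map_map, toE_comp_inl]
  · rintro ⟨p, hp, rfl⟩
    obtain ⟨p, rfl⟩ : p ∈ Set.range (List.map Sum.inl) := by
      rw [Set.range_list_map]
      exact HEGraph.mem_range_inl_of_isClosedPath hp
    rw [List.map_map, toE_comp_inl]
    exact ⟨HEGraph.isClosedPath_map_inl_iff.mp hp, List.forall_mem_map.mpr fun e _ => e.2⟩

/-- for hereditary `H`, no vertex of `F_E(H)` is the range of any
edge of `_HE`; consequently every closed path of `_HE` consists entirely of edges
of `E` with source in `H`, and the closed paths of `_HE` are exactly the closed
paths of `E` all of whose vertices lie in `H`. -/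
theorem stmt18 {V Edg : Type*} (G : DGraph V Edg) (H : Set V) (hH : G.Hereditary H) :
    (∀ (f : {e : Edg // G.s e ∈ H} ⊕ FPath G H) (α : FPath G H),
      (HEGraph G H).r f ≠ Sum.inr α) ∧
    (∀ p : List ({e : Edg // G.s e ∈ H} ⊕ FPath G H), (HEGraph G H).IsClosedPath p →
      ∀ f ∈ p, ∃ e : {e : Edg // G.s e ∈ H}, f = Sum.inl e) ∧
    (∀ q : List Edg,
      (G.IsClosedPath q ∧ ∀ e ∈ q, G.s e ∈ H) ↔
      (∃ p : List ({e : Edg // G.s e ∈ H} ⊕ FPath G H),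
        (HEGraph G H).IsClosedPath p ∧ p.map (toE G H) = q)) :=
  stmt18_general G H
end
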